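/- Let α ∈ Δ^{K-1} maximize Σ_{i=1}^K exp(-τ_i/σ²)·d_i, where τ_i = (2^R-1)/(P(α_i - (2^R-1)β_i)) if α_i - (2^R-1)β_i > 0 and τ_i = +∞ otherwise. Then τ_i = +∞ if and only if α_i = 0. -/

import Mathlib

/-!
Write `c = 2^R - 1 > 0`. Each summand of the objective is a nondecreasing function of the margin
`x_m = α_m - c β_m`, zero for `x_m ≤ 0` and strictly increasing for `x_m > 0`, and every margin is
affine in `α`. If `α_i = 0` then `x_i = -c β_i ≤ 0`. Conversely, a maximizer has some positive
margin (a point mass does), so let `j` be the least index with `x_j > 0`. If `α_i > 0` but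
`x_i ≤ 0`, moving the mass `α_i` from `i` to `j` raises `x_j` by at least `α_i` and lowers no
margin `x_m` with `m ≥ j`, `m ≠ i`; the margins that may drop had no weight anyway, so the
objective strictly increases, contradicting maximality.
-/

open Finset

/-- Residual power β_i = Σ_{j>i} α_j. -/
noncomputable def resid {K : ℕ} (α : Fin K → ℝ) (i : Fin K) : ℝ :=
  ∑ j ∈ Finset.Ioi i, α j

/-- Effective power margin x_i = α_i - (2^R - 1) β_i. -/
noncomputable def margin {K : ℕ} (R : ℝ) (α : Fin K → ℝ) (i : Fin K) : ℝ :=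
  α i - ((2:ℝ) ^ R - 1) * resid α i

/-- Asymptotic PDS objective Σ_i exp(-τ_i/σ²) d_i, with exp(-∞) := 0. -/
noncomputable def pdsObj {K : ℕ} (R P σ2 : ℝ) (d : Fin K → ℝ) (α : Fin K → ℝ) : ℝ :=
  ∑ i : Fin K,
    (if 0 < margin R α i then
        Real.exp (-(((2:ℝ) ^ R - 1) / (P * margin R α i)) / σ2)
      else 0) * d i

/-- The standard simplex. -/
noncomputable def simplex (K : ℕ) : Set (Fin K → ℝ) :=
  {α | (∀ i, 0 ≤ α i) ∧ ∑ i, α i = 1}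

noncomputable def pdsWeight (c P σ2 x : ℝ) : ℝ :=
  if 0 < x then Real.exp (-(c / (P * x)) / σ2) else 0

section pdsWeight

variable {c P σ2 x y : ℝ}

lemma pdsWeight_of_nonpos (hx : x ≤ 0) : pdsWeight c P σ2 x = 0 :=
  if_neg hx.not_gt

lemma pdsWeight_pos (hx : 0 < x) : 0 < pdsWeight c P σ2 x := by
  rw [pdsWeight, if_pos hx]
  exact Real.exp_pos _

lemma pdsWeight_nonneg : 0 ≤ pdsWeight c P σ2 x := by
  rcases le_or_gt x 0 with hx | hx
  · rw [pdsWeight_of_nonpos hx]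
  · exact (pdsWeight_pos hx).le

lemma pdsWeight_lt (hc : 0 < c) (hP : 0 < P) (hσ : 0 < σ2) (hxy : x < y) (hy : 0 < y) :
    pdsWeight c P σ2 x < pdsWeight c P σ2 y := by
  rcases le_or_gt x 0 with hx | hx
  · rw [pdsWeight_of_nonpos hx]
    exact pdsWeight_pos hy
  · rw [pdsWeight, pdsWeight, if_pos hx, if_pos hy]
    gcongr

lemma pdsWeight_le (hc : 0 < c) (hP : 0 < P) (hσ : 0 < σ2) (h : 0 < x → x ≤ y) :
    pdsWeight c P σ2 x ≤ pdsWeight c P σ2 y := by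
  rcases le_or_gt x 0 with hx | hx
  · rw [pdsWeight_of_nonpos hx]
    exact pdsWeight_nonneg
  · rcases (h hx).lt_or_eq with hxy | rfl
    · exact (pdsWeight_lt hc hP hσ hxy (hx.trans hxy)).le
    · exact le_rfl

end pdsWeight

section margin

variable {K : ℕ} {R : ℝ}

lemma resid_add (α β : Fin K → ℝ) (i : Fin K) : resid (α + β) i = resid α i + resid β i :=
  sum_add_distrib

lemma resid_sub (α β : Fin K → ℝ) (i : Fin K) : resid (α - β) i = resid α i - resid β i :=
  sum_sub_distrib ..

lemma resid_single (j m : Fin K) (t : ℝ) :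
    resid (Pi.single j t) m = if m < j then t else 0 := by
  simp only [resid, sum_pi_single', mem_Ioi]

lemma resid_nonneg {α : Fin K → ℝ} (hα : ∀ l, 0 ≤ α l) (i : Fin K) : 0 ≤ resid α i :=
  sum_nonneg fun l _ => hα l

lemma margin_add (α β : Fin K → ℝ) (i : Fin K) :
    margin R (α + β) i = margin R α i + margin R β i := by
  simp only [margin, resid_add, Pi.add_apply]
  ring

lemma margin_sub (α β : Fin K → ℝ) (i : Fin K) :
    margin R (α - β) i = margin R α i - margin R β i := by
  simp only [margin, resid_sub, Pi.sub_apply]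
  ring

lemma margin_single (j m : Fin K) (t : ℝ) :
    margin R (Pi.single j t) m
      = (if m = j then t else 0) - ((2:ℝ) ^ R - 1) * (if m < j then t else 0) := by
  rw [margin, resid_single, Pi.single_apply]

lemma margin_nonpos_of_eq_zero (hc : 0 ≤ (2:ℝ) ^ R - 1) {α : Fin K → ℝ} (hα : ∀ l, 0 ≤ α l)
    {i : Fin K} (hi : α i = 0) : margin R α i ≤ 0 := by
  rw [margin, hi, zero_sub, neg_nonpos]
  exact mul_nonneg hc (resid_nonneg hα i)

lemma margin_transfer_ge (hc : 0 ≤ (2:ℝ) ^ R - 1) (α : Fin K → ℝ) {i j m : Fin K} {t : ℝ}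
    (ht : 0 ≤ t) (hjm : j ≤ m) (hmi : m ≠ i) :
    margin R α m + (if m = j then t else 0)
      ≤ margin R (α + Pi.single j t - Pi.single i t) m := by
  rw [margin_sub, margin_add, margin_single, margin_single, if_neg hmi, if_neg hjm.not_gt]
  have : 0 ≤ ((2:ℝ) ^ R - 1) * (if m < i then t else 0) := by
    split_ifs <;> positivity
  linarith

lemma single_mem_simplex (i : Fin K) : Pi.single i 1 ∈ simplex K :=
  ⟨fun l => by rw [Pi.single_apply]; split_ifs <;> norm_num,
    by rw [sum_pi_single', if_pos (mem_univ i)]⟩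

lemma transfer_mem_simplex {α : Fin K → ℝ} (hα : α ∈ simplex K) {i j : Fin K} {t : ℝ}
    (ht : 0 ≤ t) (hti : t ≤ α i) : α + Pi.single j t - Pi.single i t ∈ simplex K := by
  obtain ⟨hnn, hsum⟩ := hα
  refine ⟨fun l => ?_, ?_⟩
  · simp only [Pi.sub_apply, Pi.add_apply, Pi.single_apply]
    split_ifs with hlj hli hli
    · linarith [hnn l]
    · linarith [hnn l]
    · subst hli; linarith
    · linarith [hnn l]
  · simp only [Pi.sub_apply, Pi.add_apply, sum_sub_distrib, sum_add_distrib, sum_pi_single',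
      if_pos (mem_univ _), hsum]
    ring

end margin

section pdsObj

variable {K : ℕ} {R P σ2 : ℝ} {d : Fin K → ℝ}

lemma pdsObj_eq (α : Fin K → ℝ) :
    pdsObj R P σ2 d α = ∑ m, pdsWeight ((2:ℝ) ^ R - 1) P σ2 (margin R α m) * d m :=
  rfl

lemma exists_margin_pos_of_pdsObj_pos {α : Fin K → ℝ} (h : 0 < pdsObj R P σ2 d α) :
    ∃ m, 0 < margin R α m := by
  by_contra! hall
  rw [pdsObj_eq, sum_eq_zero fun m _ => by rw [pdsWeight_of_nonpos (hall m), zero_mul]] at h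
  exact h.false

lemma pdsObj_single_pos (hdpos : ∀ m, 0 < d m) (i : Fin K) :
    0 < pdsObj R P σ2 d (Pi.single i 1) := by
  have hmargin : margin R (Pi.single i (1:ℝ)) i = 1 := by
    rw [margin_single, if_pos rfl, if_neg (lt_irrefl i)]
    ring
  rw [pdsObj_eq]
  refine sum_pos' (fun m _ => mul_nonneg pdsWeight_nonneg (hdpos m).le) ⟨i, mem_univ i, ?_⟩
  rw [hmargin]
  exact mul_pos (pdsWeight_pos one_pos) (hdpos i)

lemma pdsObj_lt_of_margin_le (hc : 0 < (2:ℝ) ^ R - 1) (hP : 0 < P) (hσ : 0 < σ2)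
    (hdpos : ∀ m, 0 < d m) {α α' : Fin K → ℝ}
    (hle : ∀ m, 0 < margin R α m → margin R α m ≤ margin R α' m)
    {j : Fin K} (hlt : margin R α j < margin R α' j) (hpos : 0 < margin R α' j) :
    pdsObj R P σ2 d α < pdsObj R P σ2 d α' := by
  rw [pdsObj_eq, pdsObj_eq]
  exact sum_lt_sum
    (fun m _ => mul_le_mul_of_nonneg_right (pdsWeight_le hc hP hσ (hle m)) (hdpos m).le)
    ⟨j, mem_univ j, mul_lt_mul_of_pos_right (pdsWeight_lt hc hP hσ hlt hpos) (hdpos j)⟩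

lemma margin_pos_of_isMaxOn (hc : 0 < (2:ℝ) ^ R - 1) (hP : 0 < P) (hσ : 0 < σ2)
    (hdpos : ∀ m, 0 < d m) {α : Fin K → ℝ} (hα : α ∈ simplex K)
    (hmax : IsMaxOn (pdsObj R P σ2 d) (simplex K) α) {i : Fin K} (hi : 0 < α i) :
    0 < margin R α i := by
  by_contra hmi
  have hobj : 0 < pdsObj R P σ2 d α :=
    (pdsObj_single_pos hdpos i).trans_le (hmax (single_mem_simplex i))
  obtain ⟨j, hj, hjmin⟩ :=
    wellFounded_lt.has_min {m | 0 < margin R α m} (exists_margin_pos_of_pdsObj_pos hobj)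
  have hji : j ≠ i := fun h => hmi (h ▸ hj)
  have hjle : ∀ m, 0 < margin R α m → j ≤ m := fun m hm => not_lt.1 (hjmin m hm)
  have hgain := margin_transfer_ge hc.le α hi.le le_rfl hji
  rw [if_pos rfl] at hgain
  refine (hmax (transfer_mem_simplex hα hi.le le_rfl)).not_gt
    (pdsObj_lt_of_margin_le hc hP hσ hdpos (fun m hm => ?_) (by linarith) (by linarith [hj.out]))
  have hmi' : m ≠ i := by rintro rfl; exact hmi hm
  have := margin_transfer_ge hc.le α hi.le (hjle m hm) hmi'
  split_ifs at this <;> linarith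

end pdsObj

theorem tau_infinite_iff_alpha_zero_general (K : ℕ) (R P σ2 : ℝ)
    (hR : 0 < R) (hP : 0 < P) (hσ : 0 < σ2)
    (d : Fin K → ℝ) (hdpos : ∀ i, 0 < d i)
    (α : Fin K → ℝ) (hα : α ∈ simplex K)
    (hmax : ∀ α' ∈ simplex K, pdsObj R P σ2 d α' ≤ pdsObj R P σ2 d α) :
    ∀ i : Fin K, ¬ 0 < margin R α i ↔ α i = 0 := by
  have hc : 0 < (2:ℝ) ^ R - 1 := sub_pos.2 (Real.one_lt_rpow one_lt_two hR)
  intro i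
  constructor
  · intro hmi
    by_contra hne
    exact hmi (margin_pos_of_isMaxOn hc hP hσ hdpos hα hmax ((hα.1 i).lt_of_ne' hne))
  · exact fun hi => (margin_nonpos_of_eq_zero hc.le hα.1 hi).not_gt

/-- At any maximizer of the PDS objective, τ_i = +∞ (i.e. the margin is not
positive) if and only if α_i = 0. -/
theorem tau_infinite_iff_alpha_zero (K : ℕ) (hK : 2 ≤ K) (R P σ2 : ℝ)
    (hR : 0 < R) (hP : 0 < P) (hσ : 0 < σ2)
    (d : Fin K → ℝ) (hd : StrictAnti d) (hdpos : ∀ i, 0 < d i)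
    (α : Fin K → ℝ) (hα : α ∈ simplex K)
    (hmax : ∀ α' ∈ simplex K, pdsObj R P σ2 d α' ≤ pdsObj R P σ2 d α) :
    ∀ i : Fin K, ¬ 0 < margin R α i ↔ α i = 0 :=
  tau_infinite_iff_alpha_zero_general K R P σ2 hR hP hσ d hdpos α hα hmax
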